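/- Let p be a prime and let 0 < ε < 1. Then for every natural number d with d ≥ 2·ln(2p)/ε there exist k_1, …, k_d ∈ {0, 1, …, p−1} such that for every j ∈ {1, …, p−1}: (1/d²)·(Σ_{i=1}^d cos(2πk_i j/p))² ≤ ε, equivalently |Σ_{i=1}^d cos(2πk_i j/p)| ≤ √ε·d. -/

import Mathlib

open Real Finset

/-!
Probabilistic method. Choose `k : Fin d → Fin p` uniformly at random. For `p ∤ j` the
numbers `cos (2πkj/p)`, `k < p`, lie in `[-1, 1]` and sum to `0` (real parts of a geometric
sum of a nontrivial `p`-th root of unity), so Hoeffding's inequality bounds the number of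
tuples with `|∑ᵢ cos (2πkᵢj/p)| > √ε d` by `2 pᵈ e^{-εd/2} ≤ pᵈ / p`. A union bound over the
`p - 1` values of `j` leaves fewer than `pᵈ` bad tuples.
-/

lemma sum_range_cos_two_pi_mul_div_eq_zero {p j : ℕ} (hj : ¬ p ∣ j) :
    ∑ k ∈ range p, cos (2 * π * k * j / p) = 0 := by
  rcases eq_or_ne p 0 with rfl | hp
  · simp
  have hζ := Complex.isPrimitiveRoot_exp p hp
  set z := Complex.exp (2 * π * Complex.I / p) ^ j
  have hz1 : z ≠ 1 := mt (hζ.pow_eq_one_iff_dvd j).mp hj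
  have hzp : z ^ p = 1 := by rw [pow_right_comm, hζ.pow_eq_one, one_pow]
  have hgeom : ∑ k ∈ range p, z ^ k = 0 := by
    have h := geom_sum_mul z p
    rw [hzp, sub_self] at h
    exact (mul_eq_zero.mp h).resolve_right (sub_ne_zero.mpr hz1)
  have hre (k : ℕ) : (z ^ k).re = cos (2 * π * k * j / p) := by
    rw [← pow_mul, ← Complex.exp_nat_mul, ← Complex.exp_ofReal_mul_I_re]
    congr 2
    push_cast
    ring
  simpa [hre] using congrArg Complex.re hgeom

/-- Convexity of `exp` on the segment `[-t, t]`. -/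
lemma exp_mul_le_cosh_add_mul_sinh (t : ℝ) {x : ℝ} (hx : |x| ≤ 1) :
    exp (t * x) ≤ cosh t + x * sinh t := by
  obtain ⟨hx₁, hx₂⟩ := abs_le.mp hx
  have h := convexOn_exp.2 (Set.mem_univ (-t)) (Set.mem_univ t)
    (by linarith : 0 ≤ (1 - x) / 2) (by linarith : 0 ≤ (1 + x) / 2) (by ring)
  simp only [smul_eq_mul] at h
  calc exp (t * x) = exp ((1 - x) / 2 * -t + (1 + x) / 2 * t) := by ring_nf
    _ ≤ (1 - x) / 2 * exp (-t) + (1 + x) / 2 * exp t := h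
    _ = cosh t + x * sinh t := by rw [cosh_eq, sinh_eq]; ring

lemma card_filter_lt_mul_exp_le {α : Type*} [Fintype α] (X : α → ℝ) {c : ℝ} (hc : 0 ≤ c)
    (B : ℝ) : #{a | B < X a} * exp (c * B) ≤ ∑ a, exp (c * X a) :=
  calc (#{a | B < X a} : ℝ) * exp (c * B) = ∑ a with B < X a, exp (c * B) := by
        rw [sum_const, nsmul_eq_mul]
    _ ≤ ∑ a with B < X a, exp (c * X a) := by
        gcongr with a ha
        exact (mem_filter.mp ha).2.le
    _ ≤ ∑ a, exp (c * X a) :=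
        sum_le_sum_of_subset_of_nonneg (subset_univ _) fun _ _ _ ↦ (exp_pos _).le

section Hoeffding

variable {ι : Type*} [Fintype ι] {x : ι → ℝ}

lemma sum_exp_mul_le_of_sum_eq_zero (hx : ∀ k, |x k| ≤ 1) (hsum : ∑ k, x k = 0) (c : ℝ) :
    ∑ k, exp (c * x k) ≤ Fintype.card ι * exp (c ^ 2 / 2) :=
  calc ∑ k, exp (c * x k) ≤ ∑ k, (cosh c + x k * sinh c) :=
        sum_le_sum fun k _ ↦ exp_mul_le_cosh_add_mul_sinh c (hx k)
    _ = Fintype.card ι * cosh c := by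
        rw [sum_add_distrib, ← sum_mul, hsum, zero_mul, add_zero, sum_const, nsmul_eq_mul,
          card_univ]
    _ ≤ Fintype.card ι * exp (c ^ 2 / 2) :=
        mul_le_mul_of_nonneg_left (cosh_le_exp_half_sq c) (Nat.cast_nonneg _)

lemma sum_exp_mul_sum_le_of_sum_eq_zero (hx : ∀ k, |x k| ≤ 1) (hsum : ∑ k, x k = 0)
    (c : ℝ) (d : ℕ) :
    ∑ f : Fin d → ι, exp (c * ∑ i, x (f i)) ≤ (Fintype.card ι * exp (c ^ 2 / 2)) ^ d :=
  calc ∑ f : Fin d → ι, exp (c * ∑ i, x (f i)) = (∑ k, exp (c * x k)) ^ d := by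
        simp only [Fintype.sum_pow, mul_sum, exp_sum]
    _ ≤ _ := pow_le_pow_left₀ (by positivity) (sum_exp_mul_le_of_sum_eq_zero hx hsum c) d

lemma card_filter_mul_lt_sum_le (hx : ∀ k, |x k| ≤ 1) (hsum : ∑ k, x k = 0) {s : ℝ}
    (hs : 0 ≤ s) (d : ℕ) :
    (#{f : Fin d → ι | s * d < ∑ i, x (f i)} : ℝ) ≤
      Fintype.card ι ^ d * exp (-(s ^ 2 * d / 2)) := by
  have h := (card_filter_lt_mul_exp_le (fun f : Fin d → ι ↦ ∑ i, x (f i)) hs (s * d)).trans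
    (sum_exp_mul_sum_le_of_sum_eq_zero hx hsum s d)
  rw [mul_pow, ← exp_nat_mul, ← le_div_iff₀ (exp_pos _), mul_div_assoc, ← exp_sub] at h
  refine h.trans_eq ?_
  congr 2
  ring

lemma card_filter_mul_lt_abs_sum_le (hx : ∀ k, |x k| ≤ 1) (hsum : ∑ k, x k = 0) {s : ℝ}
    (hs : 0 ≤ s) (d : ℕ) :
    (#{f : Fin d → ι | s * d < |∑ i, x (f i)|} : ℝ) ≤
      2 * Fintype.card ι ^ d * exp (-(s ^ 2 * d / 2)) := by
  classical
  have hx' : ∀ k, |(-x) k| ≤ 1 := fun k ↦ (abs_neg (x k)).trans_le (hx k)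
  have hsum' : ∑ k, (-x) k = 0 := by simp [hsum]
  have hsub : ({f | s * d < |∑ i, x (f i)|} : Finset (Fin d → ι)) ⊆
      ({f | s * d < ∑ i, x (f i)} : Finset (Fin d → ι)) ∪
        ({f | s * d < ∑ i, (-x) (f i)} : Finset (Fin d → ι)) := by
    intro f
    simp only [mem_filter, mem_univ, true_and, mem_union, Pi.neg_apply, sum_neg_distrib]
    exact lt_abs.mp
  calc (#{f : Fin d → ι | s * d < |∑ i, x (f i)|} : ℝ)
      ≤ #{f : Fin d → ι | s * d < ∑ i, x (f i)} +
          #{f : Fin d → ι | s * d < ∑ i, (-x) (f i)} := by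
        exact_mod_cast (card_le_card hsub).trans (card_union_le _ _)
    _ ≤ _ := by
        linarith [card_filter_mul_lt_sum_le hx hsum hs d,
          card_filter_mul_lt_sum_le hx' hsum' hs d]

end Hoeffding

lemma exists_forall_not_of_card_filter_le {α β : Type*} [Fintype α] (J : Finset β)
    (P : β → α → Prop) [∀ j, DecidablePred (P j)] {B : ℝ}
    (hP : ∀ j ∈ J, (#{a | P j a} : ℝ) ≤ B) (hJ : #J * B < Fintype.card α) :
    ∃ a, ∀ j ∈ J, ¬ P j a := by
  classical
  by_contra! h
  have hcover : (univ : Finset α) ⊆ J.biUnion fun j ↦ {a | P j a} := fun a _ ↦ by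
    simpa using h a
  have : (Fintype.card α : ℝ) ≤ #J * B :=
    calc (Fintype.card α : ℝ) ≤ ∑ j ∈ J, (#{a | P j a} : ℝ) := by
          exact_mod_cast (card_le_card hcover).trans card_biUnion_le
      _ ≤ #J * B := by simpa using sum_le_sum hP
  linarith

lemma two_mul_exp_neg_le_inv {n t : ℝ} (hn : 0 < n) (ht : 2 * log (2 * n) ≤ t) :
    2 * exp (-(t / 2)) ≤ n⁻¹ := by
  have : exp (-(t / 2)) ≤ (2 * n)⁻¹ := by
    rw [← exp_log (by positivity : 0 < 2 * n), ← exp_neg]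
    exact exp_le_exp.mpr (by linarith)
  calc 2 * exp (-(t / 2)) ≤ 2 * (2 * n)⁻¹ := by gcongr
    _ = n⁻¹ := by field_simp

lemma one_div_sq_mul_sq_le_of_abs_le {S ε d : ℝ} (hε : 0 ≤ ε) (h : |S| ≤ √ε * d) :
    1 / d ^ 2 * S ^ 2 ≤ ε := by
  have hS : S ^ 2 ≤ ε * d ^ 2 := by
    simpa [mul_pow, sq_sqrt hε] using sq_le_sq.mpr (h.trans (le_abs_self _))
  rw [one_div_mul_eq_div]
  exact div_le_of_le_mul₀ (sq_nonneg d) hε hS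

theorem exists_good_sequence_general (p : ℕ) (hp : p.Prime) (ε : ℝ) (hε0 : 0 < ε)
    (d : ℕ) (hd : 2 * Real.log (2 * p) / ε ≤ (d : ℝ)) :
    ∃ k : Fin d → ℕ, (∀ i, k i < p) ∧
      ∀ j : ℕ, 1 ≤ j → j ≤ p - 1 →
        (1 / (d : ℝ) ^ 2) * (∑ i, Real.cos (2 * π * (k i) * j / p)) ^ 2 ≤ ε ∧
        |∑ i, Real.cos (2 * π * (k i) * j / p)| ≤ Real.sqrt ε * d := by
  have hp0 : (0 : ℝ) < p := by exact_mod_cast hp.pos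
  have hεd : 2 * log (2 * p) ≤ ε * d := by rw [div_le_iff₀ hε0] at hd; linarith
  let x (j : ℕ) (k : Fin p) : ℝ := cos (2 * π * (k : ℕ) * j / p)
  have hbad : ∀ j ∈ Icc 1 (p - 1),
      (#{f : Fin d → Fin p | √ε * d < |∑ i, x j (f i)|} : ℝ) ≤ p ^ d * (p : ℝ)⁻¹ := by
    intro j hj
    obtain ⟨hj1, hj2⟩ := mem_Icc.mp hj
    have hsum : ∑ k, x j k = 0 := by
      rw [Fin.sum_univ_eq_sum_range (fun k ↦ cos (2 * π * k * j / p))]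
      exact sum_range_cos_two_pi_mul_div_eq_zero (Nat.not_dvd_of_pos_of_lt hj1 (by omega))
    calc _ ≤ 2 * p ^ d * exp (-(√ε ^ 2 * d / 2)) := by
          simpa using card_filter_mul_lt_abs_sum_le (fun k ↦ abs_cos_le_one _) hsum
            (sqrt_nonneg ε) d
      _ ≤ p ^ d * (p : ℝ)⁻¹ := by
          rw [sq_sqrt hε0.le, mul_comm 2, mul_assoc]
          gcongr
          exact two_mul_exp_neg_le_inv hp0 hεd
  have hcount :
      #(Icc 1 (p - 1)) * ((p : ℝ) ^ d * (p : ℝ)⁻¹) < Fintype.card (Fin d → Fin p) := by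
    rw [Nat.card_Icc, Nat.add_sub_cancel, Nat.cast_sub hp.one_le]
    simp only [Fintype.card_fun, Fintype.card_fin, Nat.cast_pow, Nat.cast_one]
    have : (0 : ℝ) < p ^ d := by positivity
    field_simp
    nlinarith
  obtain ⟨f, hf⟩ := exists_forall_not_of_card_filter_le _ _ hbad hcount
  refine ⟨fun i ↦ f i, fun i ↦ (f i).isLt, fun j hj1 hj2 ↦ ?_⟩
  have habs := not_lt.mp (hf j (mem_Icc.mpr ⟨hj1, hj2⟩))
  exact ⟨one_div_sq_mul_sq_le_of_abs_le hε0.le habs, habs⟩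

theorem exists_good_sequence (p : ℕ) (hp : p.Prime) (ε : ℝ) (hε0 : 0 < ε) (hε1 : ε < 1)
    (d : ℕ) (hd : 2 * Real.log (2 * p) / ε ≤ (d : ℝ)) :
    ∃ k : Fin d → ℕ, (∀ i, k i < p) ∧
      ∀ j : ℕ, 1 ≤ j → j ≤ p - 1 →
        (1 / (d : ℝ) ^ 2) * (∑ i, Real.cos (2 * π * (k i) * j / p)) ^ 2 ≤ ε ∧
        |∑ i, Real.cos (2 * π * (k i) * j / p)| ≤ Real.sqrt ε * d :=
  exists_good_sequence_general p hp ε hε0 d hd
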